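/- Let φ be an argumentation kernel on [0,1]^n. The restriction of k_φ(x)_i = x_i(1+φ_i(x)) to H_φ is a homeomorphism from H_φ onto W = [0,1]^n with inverse h_φ; in particular the fixed-point map h_φ: W → H_φ is continuous. -/

import Mathlib

/-- The unit box `[0,1]^n` as a subset of `Fin n → ℝ`. -/
def unitBox (n : ℕ) : Set (Fin n → ℝ) := Set.pi Set.univ fun _ => Set.Icc (0:ℝ) 1

/-- An argumentation kernel function: continuous, nonnegative, monotone
(w.r.t. the componentwise order) and homogeneous (for scalars in `[0,1]`)
function on `[0,1]^n`. -/
def IsKernelFun (n : ℕ) (φ : (Fin n → ℝ) → ℝ) : Prop :=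
  ContinuousOn φ (unitBox n) ∧
  (∀ x ∈ unitBox n, 0 ≤ φ x) ∧
  (∀ x ∈ unitBox n, ∀ y ∈ unitBox n, (∀ i, x i ≤ y i) → φ x ≤ φ y) ∧
  (∀ x ∈ unitBox n, ∀ t ∈ Set.Icc (0:ℝ) 1, φ (fun j => t * x j) = t * φ x)

/-
Write `k_φ = kernelMap φ` and `H_φ = W ∩ k_φ⁻¹(W)`. Since `k_φ` is continuous and `H_φ` is
compact, it suffices to show that `k_φ` maps `H_φ` bijectively onto `W`.

Both injectivity and surjectivity rest on one comparison argument. Suppose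
`a (1 + A) = b (1 + B)` coordinatewise, with `0 ≤ A, B ≤ M`, and that `t a ≤ b`, `t b ≤ a`
imply `t A ≤ B`, `t B ≤ A`. Then from `t a ≤ b`, `t b ≤ a` one gets the same with `t`
replaced by `1 - q (1 - t)`, `q = M / (1 + M) < 1`; iterating from `t = 0` gives `a = b`.
For injectivity take `A = φ a`, `B = φ b`: homogeneity and monotonicity of `φ` give the
scaling hypothesis. For surjectivity onto `w`, the map `T x = w / (1 + φ x)` is antitone on
`[0, w]`, so `T ∘ T` has a fixed point `a` by Knaster–Tarski; with `b = T a`, `A = φ b` and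
`B = φ a`, the same argument gives `a = T a`, i.e. `k_φ a = w`.
-/

open Set Filter Topology

lemma exists_homeomorph_of_bijOn {X Y : Type*} [TopologicalSpace X] [TopologicalSpace Y]
    [T2Space Y] {f : X → Y} {s : Set X} {t : Set Y} (hs : IsCompact s)
    (hf : ContinuousOn f s) (hbij : BijOn f s t) :
    ∃ e : s ≃ₜ t, ∀ x, (e x : Y) = f x := by
  have := isCompact_iff_compactSpace.mp hs
  exact ⟨(hf.mapsToRestrict hbij.mapsTo).homeoOfEquivCompactToT2 (f := hbij.equiv f),
    fun _ => rfl⟩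

lemma exists_apply_apply_eq_of_antitone {α : Type*} [CompleteLattice α] {T : α → α}
    (hT : Antitone T) : ∃ a, T (T a) = a :=
  let g : α →o α := ⟨T ∘ T, hT.comp hT⟩
  ⟨g.lfp, g.map_lfp⟩

lemma mul_le_of_mul_one_add_eq {a b A B M t : ℝ} (hb : 0 ≤ b) (hA : 0 ≤ A) (hAM : A ≤ M)
    (ht : t ≤ 1) (htA : t * A ≤ B) (h : a * (1 + A) = b * (1 + B)) :
    (1 - M / (1 + M) * (1 - t)) * b ≤ a := by
  have hM : 0 < 1 + M := by linarith
  have hkey : (1 + t * M) * b * (1 + A) ≤ (1 + M) * a * (1 + A) := calc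
    (1 + t * M) * b * (1 + A) ≤ (1 + M) * (b * (1 + t * A)) := by
      nlinarith [mul_nonneg hb (mul_nonneg (sub_nonneg.mpr hAM) (sub_nonneg.mpr ht))]
    _ ≤ (1 + M) * (b * (1 + B)) := by gcongr
    _ = (1 + M) * a * (1 + A) := by rw [← h]; ring
  have hcoef : 1 - M / (1 + M) * (1 - t) = (1 + t * M) / (1 + M) := by
    field_simp; ring
  rw [hcoef, div_mul_eq_mul_div, div_le_iff₀ hM, mul_comm a]
  exact le_of_mul_le_mul_right hkey (by linarith)

lemma eq_of_mul_one_add_eq {ι : Type*} {a b A B : ι → ℝ} {M : ℝ} (ha : 0 ≤ a) (hb : 0 ≤ b)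
    (hA : 0 ≤ A) (hB : 0 ≤ B) (hM : 0 ≤ M) (hAM : ∀ i, A i ≤ M) (hBM : ∀ i, B i ≤ M)
    (h : ∀ i, a i * (1 + A i) = b i * (1 + B i))
    (hscale : ∀ t ∈ Icc (0 : ℝ) 1, t • a ≤ b → t • b ≤ a → t • A ≤ B ∧ t • B ≤ A) :
    a = b := by
  set q := M / (1 + M)
  have hq0 : 0 ≤ q := by positivity
  have hq1 : q < 1 := (div_lt_one (by linarith)).2 (by linarith)
  have hmul : ∀ k : ℕ, (1 - q ^ k) • a ≤ b ∧ (1 - q ^ k) • b ≤ a := by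
    intro k
    induction k with
    | zero => simpa using ⟨hb, ha⟩
    | succ k ih =>
      have ht : 1 - q ^ k ∈ Icc (0 : ℝ) 1 :=
        ⟨sub_nonneg.2 (pow_le_one₀ hq0 hq1.le), by linarith [pow_nonneg hq0 k]⟩
      obtain ⟨hAB, hBA⟩ := hscale _ ht ih.1 ih.2
      rw [show 1 - q ^ (k + 1) = 1 - q * (1 - (1 - q ^ k)) by ring]
      exact ⟨fun i => mul_le_of_mul_one_add_eq (ha i) (hB i) (hBM i) ht.2 (hBA i) (h i).symm,
        fun i => mul_le_of_mul_one_add_eq (hb i) (hA i) (hAM i) ht.2 (hAB i) (h i)⟩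
  have hlim : Tendsto (fun k : ℕ => 1 - q ^ k) atTop (𝓝 1) := by
    simpa using (tendsto_pow_atTop_nhds_zero_of_lt_one hq0 hq1).const_sub 1
  funext i
  apply le_antisymm
  · simpa using le_of_tendsto' (hlim.mul_const (a i)) fun k => (hmul k).1 i
  · simpa using le_of_tendsto' (hlim.mul_const (b i)) fun k => (hmul k).2 i

lemma unitBox_eq_Icc (n : ℕ) : unitBox n = Icc 0 1 := pi_univ_Icc 0 1

lemma mem_unitBox {n : ℕ} {x : Fin n → ℝ} : x ∈ unitBox n ↔ 0 ≤ x ∧ x ≤ 1 := by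
  rw [unitBox_eq_Icc, mem_Icc]

lemma one_mem_unitBox (n : ℕ) : (1 : Fin n → ℝ) ∈ unitBox n :=
  mem_unitBox.2 ⟨zero_le_one, le_rfl⟩

lemma isCompact_unitBox (n : ℕ) : IsCompact (unitBox n) :=
  unitBox_eq_Icc n ▸ isCompact_Icc

lemma smul_mem_unitBox {n : ℕ} {t : ℝ} {x : Fin n → ℝ} (ht : t ∈ Icc (0 : ℝ) 1)
    (hx : x ∈ unitBox n) : t • x ∈ unitBox n := by
  rw [unitBox_eq_Icc] at hx ⊢
  exact ⟨smul_nonneg ht.1 hx.1, (smul_le_of_le_one_left hx.1 ht.2).trans hx.2⟩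

namespace IsKernelFun

variable {n : ℕ} {φ : (Fin n → ℝ) → ℝ} {x y : Fin n → ℝ}

lemma nonneg (hφ : IsKernelFun n φ) (hx : x ∈ unitBox n) : 0 ≤ φ x := hφ.2.1 x hx

lemma mono (hφ : IsKernelFun n φ) (hx : x ∈ unitBox n) (hy : y ∈ unitBox n) (h : x ≤ y) :
    φ x ≤ φ y :=
  hφ.2.2.1 x hx y hy h

lemma one_add_pos (hφ : IsKernelFun n φ) (hx : x ∈ unitBox n) : 0 < 1 + φ x := by
  linarith [hφ.nonneg hx]

lemma mul_le_of_smul_le (hφ : IsKernelFun n φ) {t : ℝ} (ht : t ∈ Icc (0 : ℝ) 1)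
    (hx : x ∈ unitBox n) (hy : y ∈ unitBox n) (h : t • x ≤ y) : t * φ x ≤ φ y := by
  rw [← hφ.2.2.2 x hx t ht]
  exact hφ.mono (smul_mem_unitBox ht hx) hy h

lemma le_apply_one (hφ : IsKernelFun n φ) (hx : x ∈ unitBox n) : φ x ≤ φ 1 :=
  hφ.mono hx (one_mem_unitBox n) (mem_unitBox.1 hx).2

end IsKernelFun

section kernelMap

variable {n : ℕ} {φ : Fin n → (Fin n → ℝ) → ℝ}

def kernelMap {ι : Type*} (φ : ι → (ι → ℝ) → ℝ) (x : ι → ℝ) : ι → ℝ :=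
  fun i => x i * (1 + φ i x)

lemma continuousOn_kernelMap (hφ : ∀ i, IsKernelFun n (φ i)) :
    ContinuousOn (kernelMap φ) (unitBox n) :=
  continuousOn_pi.2 fun i => (continuous_apply i).continuousOn.mul
    (continuousOn_const.add (hφ i).1)

lemma apply_le_sum_apply_one (hφ : ∀ i, IsKernelFun n (φ i)) {x : Fin n → ℝ}
    (hx : x ∈ unitBox n) (i : Fin n) : φ i x ≤ ∑ j, φ j 1 :=
  ((hφ i).le_apply_one hx).trans <| Finset.single_le_sum
    (fun j _ => (hφ j).nonneg (one_mem_unitBox n))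
    (Finset.mem_univ i)

lemma eq_of_mul_one_add_eq_of_kernel (hφ : ∀ i, IsKernelFun n (φ i)) {a b u v : Fin n → ℝ}
    (ha : 0 ≤ a) (hb : 0 ≤ b) (hu : u ∈ unitBox n) (hv : v ∈ unitBox n)
    (h : ∀ i, a i * (1 + φ i u) = b i * (1 + φ i v))
    (hscale : ∀ t ∈ Icc (0 : ℝ) 1, t • a ≤ b → t • b ≤ a → t • u ≤ v ∧ t • v ≤ u) :
    a = b :=
  eq_of_mul_one_add_eq ha hb (fun i => (hφ i).nonneg hu) (fun i => (hφ i).nonneg hv)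
    (Finset.sum_nonneg fun j _ => (hφ j).nonneg (one_mem_unitBox n))
    (apply_le_sum_apply_one hφ hu) (apply_le_sum_apply_one hφ hv) h
    fun t ht hab hba =>
      have ⟨huv, hvu⟩ := hscale t ht hab hba
      ⟨fun i => (hφ i).mul_le_of_smul_le ht hu hv huv,
        fun i => (hφ i).mul_le_of_smul_le ht hv hu hvu⟩

lemma injOn_kernelMap (hφ : ∀ i, IsKernelFun n (φ i)) : InjOn (kernelMap φ) (unitBox n) :=
  fun _ hx _ hy h => eq_of_mul_one_add_eq_of_kernel hφ (mem_unitBox.1 hx).1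
    (mem_unitBox.1 hy).1 hx hy (congrFun h) fun _ _ hxy hyx => ⟨hxy, hyx⟩

lemma exists_kernelMap_eq (hφ : ∀ i, IsKernelFun n (φ i)) {w : Fin n → ℝ}
    (hw : w ∈ unitBox n) : ∃ x ∈ unitBox n, kernelMap φ x = w := by
  obtain ⟨hw0, hw1⟩ := mem_unitBox.1 hw
  have : Fact (0 ≤ w) := ⟨hw0⟩
  have hsub : Icc 0 w ⊆ unitBox n := unitBox_eq_Icc n ▸ Icc_subset_Icc_right hw1
  have hpos : ∀ (x : Icc 0 w) i, 0 < 1 + φ i x := fun x i => (hφ i).one_add_pos (hsub x.2)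
  let T : Icc 0 w → Icc 0 w := fun x =>
    ⟨fun i => w i / (1 + φ i x), fun i => div_nonneg (hw0 i) (hpos x i).le,
      fun i => div_le_self (hw0 i) (le_add_of_nonneg_right ((hφ i).nonneg (hsub x.2)))⟩
  have hT : Antitone T := fun x y hxy i =>
    div_le_div_of_nonneg_left (hw0 i) (hpos x i)
      (add_le_add_right ((hφ i).mono (hsub x.2) (hsub y.2) hxy) 1)
  have hmul : ∀ x i, (T x : Fin n → ℝ) i * (1 + φ i x) = w i := fun x i =>
    div_mul_cancel₀ _ (hpos x i).ne'
  obtain ⟨a, ha⟩ := exists_apply_apply_eq_of_antitone hT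
  have hTa : (a : Fin n → ℝ) = T a := by
    refine eq_of_mul_one_add_eq_of_kernel hφ a.2.1 (T a).2.1 (hsub (T a).2) (hsub a.2)
      (fun i => ?_) fun _ _ hab hba => ⟨hba, hab⟩
    rw [hmul a i, ← hmul (T a) i, ha]
  refine ⟨a, hsub a.2, funext fun i => ?_⟩
  rw [kernelMap]
  nth_rewrite 1 [hTa]
  exact hmul a i

lemma setOf_eq_div_one_add_eq (hφ : ∀ i, IsKernelFun n (φ i)) :
    {x : Fin n → ℝ | ∃ w ∈ unitBox n, x ∈ unitBox n ∧ ∀ i, x i = w i / (1 + φ i x)} =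
      unitBox n ∩ kernelMap φ ⁻¹' unitBox n := by
  ext x
  constructor
  · rintro ⟨w, hw, hx, hxw⟩
    have : kernelMap φ x = w :=
      funext fun i => (eq_div_iff ((hφ i).one_add_pos hx).ne').1 (hxw i)
    exact ⟨hx, mem_preimage.2 (this ▸ hw)⟩
  · rintro ⟨hx, hkx⟩
    exact ⟨_, hkx, hx, fun i => (eq_div_iff ((hφ i).one_add_pos hx).ne').2 rfl⟩

lemma isCompact_inter_preimage_kernelMap (hφ : ∀ i, IsKernelFun n (φ i)) :
    IsCompact (unitBox n ∩ kernelMap φ ⁻¹' unitBox n) :=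
  have hbox := (isCompact_unitBox n).isClosed
  (isCompact_unitBox n).of_isClosed_subset
    ((continuousOn_kernelMap hφ).preimage_isClosed_of_isClosed hbox hbox) inter_subset_left

lemma bijOn_kernelMap (hφ : ∀ i, IsKernelFun n (φ i)) :
    BijOn (kernelMap φ) (unitBox n ∩ kernelMap φ ⁻¹' unitBox n) (unitBox n) :=
  ⟨fun _ hx => hx.2, (injOn_kernelMap hφ).mono inter_subset_left, fun _ hw =>
    have ⟨x, hx, hxw⟩ := exists_kernelMap_eq hφ hw
    ⟨x, ⟨hx, mem_preimage.2 (hxw ▸ hw)⟩, hxw⟩⟩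

end kernelMap

/-- The restriction of `k_φ(x)_i = x_i(1+φ_i x)` to `H_φ` is a
homeomorphism onto `W = [0,1]^n` whose inverse is the fixed-point map
`h_φ`; in particular `h_φ` is continuous. -/
theorem stmt12 (n : ℕ) (φ : Fin n → (Fin n → ℝ) → ℝ)
    (hφ : ∀ i, IsKernelFun n (φ i)) :
    ∃ e : {x : Fin n → ℝ | ∃ w ∈ unitBox n,
        x ∈ unitBox n ∧ ∀ i, x i = w i / (1 + φ i x)} ≃ₜ (unitBox n),
      (∀ x, ∀ i, (e x : Fin n → ℝ) i = (x : Fin n → ℝ) i * (1 + φ i x)) ∧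
      (∀ w, ∀ i, (e.symm w : Fin n → ℝ) i =
        (w : Fin n → ℝ) i / (1 + φ i (e.symm w))) := by
  rw [setOf_eq_div_one_add_eq hφ]
  obtain ⟨e, he⟩ := exists_homeomorph_of_bijOn (isCompact_inter_preimage_kernelMap hφ)
    ((continuousOn_kernelMap hφ).mono inter_subset_left) (bijOn_kernelMap hφ)
  refine ⟨e, fun x i => congrFun (he x) i, fun w i => ?_⟩
  have hw : kernelMap φ (e.symm w) = w := by rw [← he, e.apply_symm_apply]
  rw [eq_div_iff ((hφ i).one_add_pos (e.symm w).2.1).ne']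
  exact congrFun hw i
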